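/- arXiv:2308.10553 — 2 statements merged into one kernel-verified Lean document; each statement's English description precedes it below -/
import Mathlib

section
/- Let f : ℂ → ℂ be holomorphic (complex differentiable) on the punctured unit disc {z ∈ ℂ : 0 < |z| < 1}, and suppose that the function z ↦ |f(z)|² is Lebesgue integrable on the punctured unit disc (with respect to two-dimensional Lebesgue measure on ℂ). Then f extends holomorphically across the origin: there exists a function g holomorphic on the full unit disc {z ∈ ℂ : |z| < 1} such that g(z) = f(z) for all z with 0 < |z| < 1. -/
/-!
Since `f ^ 2` is holomorphic, the mean value property bounds `‖f c‖ ^ 2` by the average of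
`‖f‖ ^ 2` over every circle around `c`; integrating over the radius in polar coordinates gives
`π r ^ 2 ‖f c‖ ^ 2 ≤ ∫_{B(c, r)} ‖f‖ ^ 2`. For the disc of radius `|z| / 2` around `z`, the right-hand
side tends to `0` as `z → 0` by integrability, so `z f(z) → 0`, i.e. `f = o(1/z)`, and Riemann's
removable singularity theorem applies.
-/

open Complex MeasureTheory
open Metric Set Real Filter Topology

theorem circleMap_eq_add_polarCoord_symm (c : ℂ) (p : ℝ × ℝ) :
    circleMap c p.1 p.2 = c + Complex.polarCoord.symm p := by
  rw [Complex.polarCoord_symm_apply, circleMap, Complex.exp_mul_I]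
  push_cast
  ring

section Polar

variable {E : Type*} [NormedAddCommGroup E] [NormedSpace ℝ E]

theorem setIntegral_Ioo_circleMap_eq_smul_circleAverage (g : ℂ → E) (c : ℂ) (r : ℝ) :
    ∫ θ in Ioo (-π) π, g (circleMap c r θ) = (2 * π) • circleAverage g c r := by
  rw [circleAverage_eq_integral_add (-π), smul_inv_smul₀ (by positivity),
    intervalIntegral.integral_comp_add_right (fun θ ↦ g (circleMap c r θ)),
    intervalIntegral.integral_of_le (by linarith [pi_pos]), integral_Ioc_eq_integral_Ioo]
  ring_nf

theorem setIntegral_ball_eq_setIntegral_Ioo_smul_circleAverage {g : ℂ → E} {c : ℂ} {ρ : ℝ}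
    (hg : ContinuousOn g (closedBall c ρ)) :
    ∫ z in ball c ρ, g z = ∫ r in Ioo 0 ρ, (2 * π * r) • circleAverage g c r := by
  set box : Set (ℝ × ℝ) := Ioo 0 ρ ×ˢ Ioo (-π) π
  set F : ℝ × ℝ → E := fun p ↦ p.1 • g (circleMap c p.1 p.2)
  have hpolar : ∀ p ∈ polarCoord.target,
      p.1 • (ball c ρ).indicator g (c + Complex.polarCoord.symm p) = box.indicator F p := by
    rintro ⟨r, θ⟩ ⟨hr, hθ⟩
    rw [← circleMap_eq_add_polarCoord_symm]
    by_cases hrρ : r < ρ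
    · have hmem : (r, θ) ∈ box := ⟨⟨hr, hrρ⟩, hθ⟩
      rw [indicator_of_mem, indicator_of_mem hmem]
      simpa [Complex.dist_eq, abs_of_pos (mem_Ioi.mp hr)] using hrρ
    · rw [indicator_of_notMem, indicator_of_notMem (fun h ↦ hrρ h.1.2), smul_zero]
      simpa [Complex.dist_eq, abs_of_pos (mem_Ioi.mp hr)] using hrρ
  have hbox : box ⊆ polarCoord.target := by
    rw [polarCoord_target]
    exact prod_mono Ioo_subset_Ioi_self subset_rfl
  have hF : IntegrableOn F box := by
    refine (ContinuousOn.integrableOn_compact (isCompact_Icc.prod isCompact_Icc) ?_).mono_set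
      (prod_mono Ioo_subset_Icc_self Ioo_subset_Icc_self)
    refine continuousOn_fst.smul (hg.comp (by fun_prop) ?_)
    rintro ⟨r, θ⟩ ⟨⟨hr0, hrρ⟩, -⟩
    exact closedBall_subset_closedBall hrρ (circleMap_mem_closedBall c hr0 θ)
  calc ∫ z in ball c ρ, g z
      = ∫ w, (ball c ρ).indicator g (c + w) := by
        rw [integral_add_left_eq_self, integral_indicator measurableSet_ball]
    _ = ∫ p in box, F p := by
        rw [← Complex.integral_comp_polarCoord_symm,
          setIntegral_congr_fun polarCoord.open_target.measurableSet hpolar,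
          setIntegral_indicator (measurableSet_Ioo.prod measurableSet_Ioo),
          inter_eq_right.mpr hbox]
    _ = ∫ r in Ioo 0 ρ, ∫ θ in Ioo (-π) π, F (r, θ) := by
        rw [Measure.volume_eq_prod, setIntegral_prod]
        rwa [← Measure.volume_eq_prod]
    _ = ∫ r in Ioo 0 ρ, (2 * π * r) • circleAverage g c r := by
        congr 1 with r
        rw [integral_smul, setIntegral_Ioo_circleMap_eq_smul_circleAverage, smul_smul, mul_comm]

theorem norm_circleAverage_le (g : ℂ → E) (c : ℂ) (R : ℝ) :
    ‖circleAverage g c R‖ ≤ circleAverage (fun z ↦ ‖g z‖) c R := by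
  rw [circleAverage_def, circleAverage_def, norm_smul, smul_eq_mul,
    Real.norm_of_nonneg (by positivity)]
  gcongr
  exact intervalIntegral.norm_integral_le_integral_norm (by positivity)

end Polar

theorem DiffContOnCl.sq_norm_le_circleAverage {f : ℂ → ℂ} {c : ℂ} {R : ℝ}
    (hf : DiffContOnCl ℂ f (ball c |R|)) :
    ‖f c‖ ^ 2 ≤ Real.circleAverage (fun z ↦ ‖f z‖ ^ 2) c R := by
  have hf2 : DiffContOnCl ℂ (fun z ↦ f z ^ 2) (ball c |R|) := ⟨hf.1.pow 2, hf.2.pow 2⟩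
  calc ‖f c‖ ^ 2 = ‖Real.circleAverage (fun z ↦ f z ^ 2) c R‖ := by
        rw [hf2.circleAverage, norm_pow]
    _ ≤ Real.circleAverage (fun z ↦ ‖f z‖ ^ 2) c R := by
      convert norm_circleAverage_le (fun z ↦ f z ^ 2) c R using 3 with z
      exact (norm_pow (f z) 2).symm

theorem mul_le_setIntegral_ball_of_le_circleAverage {g : ℂ → ℝ} {c : ℂ} {ρ : ℝ} (hρ : 0 ≤ ρ)
    (hg : ContinuousOn g (closedBall c ρ)) (hmean : ∀ r ∈ Ioo 0 ρ, g c ≤ circleAverage g c r) :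
    π * ρ ^ 2 * g c ≤ ∫ z in ball c ρ, g z := by
  have hlin : ∫ r in Ioo 0 ρ, (2 * π * r) * g c = π * ρ ^ 2 * g c := by
    rw [← integral_Ioc_eq_integral_Ioo, ← intervalIntegral.integral_of_le hρ,
      intervalIntegral.integral_mul_const, intervalIntegral.integral_const_mul, integral_id]
    ring
  have havg : ContinuousOn (circleAverage g c) (Icc 0 ρ) := by
    refine ContinuousOn.circleAverage (hg.mono fun z hz ↦ ?_) fun r hr ↦ hr.1
    simpa [Complex.dist_eq] using hz.2
  rw [setIntegral_ball_eq_setIntegral_Ioo_smul_circleAverage hg, ← hlin]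
  refine setIntegral_mono_on ?_ ?_ measurableSet_Ioo fun r hr ↦ ?_
  · exact (by fun_prop : Continuous fun r : ℝ ↦ 2 * π * r * g c).integrableOn_Icc.mono_set
      Ioo_subset_Icc_self
  · exact ((continuousOn_const.mul continuousOn_id).smul havg).integrableOn_Icc.mono_set
      Ioo_subset_Icc_self
  · exact mul_le_mul_of_nonneg_left (hmean r hr) (by nlinarith [pi_pos, hr.1])

theorem DifferentiableOn.mul_sq_norm_le_setIntegral_ball {f : ℂ → ℂ} {c : ℂ} {ρ : ℝ} (hρ : 0 ≤ ρ)
    (hf : DifferentiableOn ℂ f (closedBall c ρ)) :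
    π * ρ ^ 2 * ‖f c‖ ^ 2 ≤ ∫ z in ball c ρ, ‖f z‖ ^ 2 := by
  refine mul_le_setIntegral_ball_of_le_circleAverage hρ (hf.continuousOn.norm.pow 2) fun r hr ↦ ?_
  refine (hf.diffContOnCl_ball (closedBall_subset_closedBall ?_)).sq_norm_le_circleAverage
  rw [abs_of_pos hr.1]
  exact hr.2.le

theorem closedBall_half_dist_subset {c z : ℂ} (hz : z ≠ c) :
    closedBall z (dist z c / 2) ⊆ ball c (2 * dist z c) \ {c} := by
  intro w hw
  have hd : 0 < dist z c := dist_pos.mpr hz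
  rw [mem_closedBall] at hw
  refine ⟨mem_ball.mpr (by linarith [dist_triangle w z c]), fun hwc ↦ ?_⟩
  rw [mem_singleton_iff.mp hwc, dist_comm] at hw
  linarith

theorem tendsto_volume_ball_half_dist (c : ℂ) :
    Tendsto (fun z ↦ volume (ball z (dist z c / 2))) (𝓝 c) (𝓝 0) := by
  have h : Tendsto (fun z ↦ ENNReal.ofReal (dist z c / 2)) (𝓝 c) (𝓝 0) := by
    simpa using ENNReal.tendsto_ofReal
      (((continuous_id.dist (continuous_const (y := c))).div_const 2).tendsto c)
  simpa using ENNReal.Tendsto.mul_const (ENNReal.Tendsto.pow (n := 2) h) (.inr ENNReal.coe_ne_top)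

theorem tendsto_sub_mul_of_sq_integrable {f : ℂ → ℂ} {s : Set ℂ} {c : ℂ} (hs : s ∈ 𝓝 c)
    (hf : DifferentiableOn ℂ f (s \ {c})) (hint : IntegrableOn (fun z ↦ ‖f z‖ ^ 2) (s \ {c})) :
    Tendsto (fun z ↦ (z - c) * f z) (𝓝[≠] c) (𝓝 0) := by
  -- Integrating against `volume.restrict (s \ {c})` lets `hint` control every small ball.
  set mass : ℂ → ℝ := fun z ↦ ∫ w in ball z (dist z c / 2), ‖f w‖ ^ 2 ∂volume.restrict (s \ {c})
  have hmass : Tendsto mass (𝓝[≠] c) (𝓝 0) :=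
    hint.tendsto_setIntegral_nhds_zero (tendsto_of_tendsto_of_tendsto_of_le_of_le
      tendsto_const_nhds ((tendsto_volume_ball_half_dist c).mono_left nhdsWithin_le_nhds)
      (fun _ ↦ bot_le) fun z ↦ Measure.restrict_apply_le _ _)
  obtain ⟨ε, hε, hball⟩ := Metric.mem_nhds_iff.mp hs
  have hnear : ∀ᶠ z in 𝓝[≠] c, closedBall z (dist z c / 2) ⊆ s \ {c} := by
    filter_upwards [self_mem_nhdsWithin, nhdsWithin_le_nhds (ball_mem_nhds c (half_pos hε))]
      with z hzc hz
    refine (closedBall_half_dist_subset hzc).trans (sdiff_subset_sdiff_left (hball.trans' ?_))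
    exact ball_subset_ball (by rw [mem_ball] at hz; linarith)
  refine squeeze_zero_norm' ?_ ((hmass.const_mul (4 / π)).sqrt.trans (by simp))
  filter_upwards [hnear, self_mem_nhdsWithin] with z hz hzc
  have harea := (hf.mono hz).mul_sq_norm_le_setIntegral_ball (by positivity)
  rw [← Measure.restrict_restrict_of_subset (ball_subset_closedBall.trans hz)] at harea
  rw [norm_mul, ← Complex.dist_eq]
  refine Real.le_sqrt_of_sq_le ?_
  calc (dist z c * ‖f z‖) ^ 2 = 4 / π * (π * (dist z c / 2) ^ 2 * ‖f z‖ ^ 2) := by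
        field_simp
        ring
    _ ≤ 4 / π * mass z := by gcongr

theorem differentiableOn_update_limUnder_of_sq_integrable {f : ℂ → ℂ} {s : Set ℂ} {c : ℂ}
    (hs : s ∈ 𝓝 c) (hf : DifferentiableOn ℂ f (s \ {c}))
    (hint : IntegrableOn (fun z ↦ ‖f z‖ ^ 2) (s \ {c})) :
    DifferentiableOn ℂ (Function.update f c (limUnder (𝓝[≠] c) f)) s := by
  have hf_o : f =o[𝓝[≠] c] fun z ↦ (z - c)⁻¹ := by
    refine (Asymptotics.isLittleO_iff_tendsto' ?_).mpr ?_
    · filter_upwards [self_mem_nhdsWithin] with z hz h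
      exact absurd h (inv_ne_zero (sub_ne_zero.mpr hz))
    · simpa only [div_inv_eq_mul, mul_comm] using tendsto_sub_mul_of_sq_integrable hs hf hint
  have hconst_o : (fun _ ↦ f c) =o[𝓝[≠] c] fun z ↦ (z - c)⁻¹ :=
    IsBoundedUnder.isLittleO_sub_self_inv isBoundedUnder_const
  exact Complex.differentiableOn_update_limUnder_of_isLittleO hs hf (hf_o.sub hconst_o)

/-- L² removable singularity: a holomorphic function on the punctured unit disc whose
squared modulus is Lebesgue integrable extends holomorphically across the origin. -/
theorem holomorphic_extension_of_sq_integrable (f : ℂ → ℂ)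
    (hf : DifferentiableOn ℂ f {z : ℂ | 0 < ‖z‖ ∧ ‖z‖ < 1})
    (hint : IntegrableOn (fun z : ℂ => ‖f z‖ ^ 2)
      {z : ℂ | 0 < ‖z‖ ∧ ‖z‖ < 1} volume) :
    ∃ g : ℂ → ℂ, DifferentiableOn ℂ g {z : ℂ | ‖z‖ < 1} ∧
      ∀ z : ℂ, 0 < ‖z‖ → ‖z‖ < 1 → g z = f z := by
  have hdisc : {z : ℂ | ‖z‖ < 1} = ball 0 1 := by ext; simp
  have hpunct : {z : ℂ | 0 < ‖z‖ ∧ ‖z‖ < 1} = ball 0 1 \ {0} := by ext; simp [and_comm]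
  rw [hpunct] at hf hint
  exact ⟨_, hdisc ▸ differentiableOn_update_limUnder_of_sq_integrable (ball_mem_nhds 0 one_pos)
    hf hint, fun z hz _ ↦ Function.update_of_ne (norm_pos_iff.mp hz) _ _⟩
end

section
/- Let F ⊂ ℂ be a finite set and let u : ℂ∖F → ℝ be a continuous function that is bounded above and satisfies the sub-mean value inequality on ℂ∖F. Then u is constant on ℂ∖F. -/
/-!
A continuous sub-mean-value function on a bounded open set whose upper limits at the frontier
are `≤ m` is `≤ m`: otherwise its maximal level set would be a nonempty, compact and (by the
sub-mean-value inequality) open subset of `ℂ`. Finitely many punctures do not count as frontier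
for a bounded-above function: add `ε ∑ₚ log (|x - p| / D)`, which is `≤ 0` and tends to `-∞` at
the punctures, and let `ε → 0`. On the annuli `r < |x - z| < R` this compares `u` with
`m + (M - m) log (|x - z| / r) / log (R / r)`, where `m` bounds `u` on the inner circle and `M`
bounds `u` everywhere; letting `R → ∞` gives `u ≤ m`, and letting `r → 0` gives `u ≤ u z`.
-/

open Complex Real

/-- A function `u` satisfies the sub-mean value inequality on an open set `U ⊆ ℂ` if for
every closed disc contained in `U`, the value at the center is at most the average of the
values on the boundary circle. -/
def SubMeanValueOn (u : ℂ → ℝ) (U : Set ℂ) : Prop :=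
  ∀ c : ℂ, ∀ r : ℝ, 0 < r → Metric.closedBall c r ⊆ U →
    u c ≤ (1 / (2 * Real.pi)) *
      ∫ θ in (0:ℝ)..(2 * Real.pi), u (c + r * Complex.exp (θ * Complex.I))

open Metric Set Filter Topology

theorem subMeanValueOn_iff_le_circleAverage {u : ℂ → ℝ} {U : Set ℂ} :
    SubMeanValueOn u U ↔
      ∀ c r, 0 < r → closedBall c r ⊆ U → u c ≤ circleAverage u c r := by
  simp [SubMeanValueOn, circleAverage_def, circleMap]

theorem ContinuousOn.circleIntegrable_of_closedBall_subset {f : ℂ → ℝ} {U : Set ℂ}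
    (hf : ContinuousOn f U) {c : ℂ} {r : ℝ} (hr : 0 < r) (hc : closedBall c r ⊆ U) :
    CircleIntegrable f c r :=
  (hf.mono (sphere_subset_closedBall.trans hc)).circleIntegrable hr.le

theorem eqOn_sphere_of_le_circleAverage {f : ℂ → ℝ} {c : ℂ} {r a : ℝ} (hr : 0 < r)
    (hf : ContinuousOn f (sphere c r)) (hle : ∀ z ∈ sphere c r, f z ≤ a)
    (ha : a ≤ circleAverage f c r) : EqOn f (fun _ ↦ a) (sphere c r) := by
  intro z hz
  by_contra hne
  rw [← abs_of_pos hr, ← image_circleMap_Ioc] at hz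
  obtain ⟨θ₀, hθ₀, rfl⟩ := hz
  have hmem : ∀ θ, circleMap c r θ ∈ sphere c r := circleMap_mem_sphere c hr.le
  have hint : ∫ θ in (0:ℝ)..2 * π, f (circleMap c r θ) < ∫ _ in (0:ℝ)..2 * π, a :=
    intervalIntegral.integral_lt_integral_of_continuousOn_of_le_of_exists_lt two_pi_pos
      (hf.comp (continuous_circleMap c r).continuousOn fun θ _ ↦ hmem θ) continuousOn_const
      (fun θ _ ↦ hle _ (hmem θ)) ⟨θ₀, Ioc_subset_Icc_self hθ₀, (hle _ (hmem θ₀)).lt_of_ne hne⟩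
  have : circleAverage f c r < circleAverage (fun _ ↦ a) c r := by
    simp only [circleAverage_def, smul_eq_mul]
    exact mul_lt_mul_of_pos_left hint (inv_pos.mpr two_pi_pos)
  rw [circleAverage_const] at this
  linarith

namespace SubMeanValueOn

variable {u v : ℂ → ℝ} {U : Set ℂ}

theorem mono {V : Set ℂ} (h : SubMeanValueOn u U) (hVU : V ⊆ U) :
    SubMeanValueOn u V :=
  fun c r hr hc ↦ h c r hr (hc.trans hVU)

theorem add (hu : SubMeanValueOn u U) (hv : SubMeanValueOn v U) (huc : ContinuousOn u U)
    (hvc : ContinuousOn v U) : SubMeanValueOn (fun x ↦ u x + v x) U := by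
  rw [subMeanValueOn_iff_le_circleAverage] at *
  intro c r hr hc
  rw [circleAverage_fun_add (huc.circleIntegrable_of_closedBall_subset hr hc)
    (hvc.circleIntegrable_of_closedBall_subset hr hc)]
  exact add_le_add (hu c r hr hc) (hv c r hr hc)

theorem finset_sum {ι : Type*} {s : Finset ι} {f : ι → ℂ → ℝ}
    (hf : ∀ i ∈ s, SubMeanValueOn (f i) U) (hfc : ∀ i ∈ s, ContinuousOn (f i) U) :
    SubMeanValueOn (fun x ↦ ∑ i ∈ s, f i x) U := by
  rw [subMeanValueOn_iff_le_circleAverage]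
  intro c r hr hc
  rw [circleAverage_fun_sum fun i hi ↦ (hfc i hi).circleIntegrable_of_closedBall_subset hr hc]
  exact Finset.sum_le_sum fun i hi ↦ subMeanValueOn_iff_le_circleAverage.mp (hf i hi) c r hr hc

end SubMeanValueOn

theorem circleAverage_log_dist_div {c p : ℂ} {r : ℝ} (hr : 0 < r) (hrp : r < dist c p)
    {D : ℝ} (hD : D ≠ 0) :
    circleAverage (fun x ↦ Real.log (dist x p / D)) c r = Real.log (dist c p / D) := by
  have hne : ∀ x ∈ sphere c r, dist x p ≠ 0 := fun x hx ↦ by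
    have := dist_triangle c x p
    rw [dist_comm c x, mem_sphere.mp hx] at this
    linarith
  have hcp : dist c p ≠ 0 := (hr.trans hrp).ne'
  calc circleAverage (fun x ↦ Real.log (dist x p / D)) c r
      = circleAverage (fun x ↦ Real.log ‖x - p‖ - Real.log D) c r := by
        refine circleAverage_congr_sphere fun x hx ↦ ?_
        rw [abs_of_pos hr] at hx
        rw [Real.log_div (hne x hx) hD, Complex.dist_eq]
    _ = Real.log r + Real.log (r⁻¹ * dist c p) - Real.log D := by
        rw [circleAverage_fun_sub (circleIntegrable_log_norm_sub_const r)
          (circleIntegrable_const _ _ _), circleAverage_const,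
          circleAverage_log_norm_sub_const_eq_log_radius_add_posLog hr.ne', posLog_eq_log,
          Complex.dist_eq]
        rw [abs_of_nonneg (by positivity), ← Complex.dist_eq]
        exact (one_le_inv_mul₀ hr).mpr hrp.le
    _ = Real.log (dist c p / D) := by
        rw [Real.log_mul (inv_ne_zero hr.ne') hcp, Real.log_inv, Real.log_div hcp hD]
        ring

theorem continuousOn_log_dist_div {U : Set ℂ} {p : ℂ} (hp : p ∉ U) {D : ℝ} (hD : D ≠ 0) :
    ContinuousOn (fun x ↦ Real.log (dist x p / D)) U :=
  ((continuous_id.dist continuous_const).div_const D).continuousOn.log fun _ hx ↦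
    div_ne_zero (dist_ne_zero.mpr (ne_of_mem_of_not_mem hx hp)) hD

theorem tendsto_log_dist_div_nhdsNE (p : ℂ) {D : ℝ} (hD : 0 < D) :
    Tendsto (fun x ↦ Real.log (dist x p / D)) (𝓝[≠] p) atBot := by
  refine Real.tendsto_log_nhdsGT_zero.comp (tendsto_nhdsWithin_iff.mpr ⟨?_, ?_⟩)
  · have := ((continuous_id.dist (continuous_const (y := p))).div_const D).tendsto p
    simp only [id_eq, dist_self, zero_div] at this
    exact this.mono_left nhdsWithin_le_nhds
  · exact eventually_nhdsWithin_of_forall fun x hx ↦ div_pos (dist_pos.mpr hx) hD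

theorem subMeanValueOn_mul_log_dist_div {U : Set ℂ} {p : ℂ} (hp : p ∉ U) (b : ℝ) {D : ℝ}
    (hD : D ≠ 0) : SubMeanValueOn (fun x ↦ b * Real.log (dist x p / D)) U := by
  rw [subMeanValueOn_iff_le_circleAverage]
  intro c r hr hc
  have hrp : r < dist c p := by
    by_contra! h
    exact hp (hc (mem_closedBall'.mpr h))
  rw [← circleAverage_log_dist_div hr hrp hD]
  exact (circleAverage_fun_smul (a := b) (f := fun x ↦ Real.log (dist x p / D))).symm.le

theorem continuousOn_sum_log_dist_div {U : Set ℂ} {s : Finset ℂ} (hs : ∀ p ∈ s, p ∉ U) {D : ℝ}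
    (hD : D ≠ 0) : ContinuousOn (fun x ↦ ∑ p ∈ s, Real.log (dist x p / D)) U :=
  continuousOn_finsetSum _ fun p hp ↦ continuousOn_log_dist_div (hs p hp) hD

theorem subMeanValueOn_mul_sum_log_dist_div {U : Set ℂ} {s : Finset ℂ} (hs : ∀ p ∈ s, p ∉ U)
    (b : ℝ) {D : ℝ} (hD : D ≠ 0) :
    SubMeanValueOn (fun x ↦ b * ∑ p ∈ s, Real.log (dist x p / D)) U := by
  simp only [Finset.mul_sum]
  exact SubMeanValueOn.finset_sum (fun p hp ↦ subMeanValueOn_mul_log_dist_div (hs p hp) b hD)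
    fun p hp ↦ continuousOn_const.mul (continuousOn_log_dist_div (hs p hp) hD)

theorem frontier_ball_sdiff_closedBall_subset (z : ℂ) (r R : ℝ) :
    frontier (ball z R \ closedBall z r) ⊆ sphere z R ∪ sphere z r := by
  refine (frontier_inter_subset _ _).trans (union_subset_union ?_ ?_)
  · exact inter_subset_left.trans frontier_ball_subset_sphere
  · exact inter_subset_right.trans ((frontier_compl _).trans_subset
      frontier_closedBall_subset_sphere)

namespace SubMeanValueOn

variable {u : ℂ → ℝ} {U Q F : Set ℂ}

theorem eventually_eq_of_isLocalMax (hsm : SubMeanValueOn u U) (hU : IsOpen U)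
    (hc : ContinuousOn u U) {s : ℂ} (hs : s ∈ U) (hmax : IsLocalMax u s) :
    ∀ᶠ y in 𝓝 s, u y = u s := by
  obtain ⟨ρ, hρ, hball⟩ := eventually_nhds_iff_ball.mp (hmax.and (hU.mem_nhds hs))
  filter_upwards [ball_mem_nhds s hρ] with y hy
  rcases eq_or_ne y s with rfl | hys
  · rfl
  have hr : 0 < dist y s := dist_pos.mpr hys
  have hsub : closedBall s (dist y s) ⊆ ball s ρ := closedBall_subset_ball hy
  have hsubU : closedBall s (dist y s) ⊆ U := fun x hx ↦ (hball x (hsub hx)).2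
  exact eqOn_sphere_of_le_circleAverage hr (hc.mono (sphere_subset_closedBall.trans hsubU))
    (fun x hx ↦ (hball x (hsub (sphere_subset_closedBall hx))).1)
    (subMeanValueOn_iff_le_circleAverage.mp hsm s _ hr hsubU) (mem_sphere.mpr rfl)

theorem isOpen_setOf_eq_of_isMaxOn (hsm : SubMeanValueOn u U) (hU : IsOpen U)
    (hc : ContinuousOn u U) {x₀ : ℂ} (hmax : IsMaxOn u U x₀) :
    IsOpen {x ∈ U | u x = u x₀} := by
  refine isOpen_iff_mem_nhds.mpr fun s ⟨hsU, hs⟩ ↦ ?_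
  have hlocal : IsLocalMax u s :=
    (show IsMaxOn u U s from fun x hx ↦ hs ▸ hmax hx).isLocalMax (hU.mem_nhds hsU)
  filter_upwards [hsm.eventually_eq_of_isLocalMax hU hc hsU hlocal, hU.mem_nhds hsU]
    with y hy hyU
  exact ⟨hyU, hy.trans hs⟩

/-- The hypothesis on `u` at the frontier says `limsup_{x → y, x ∈ U} u x ≤ m`. -/
theorem le_of_forall_frontier_eventually_lt (hsm : SubMeanValueOn u U) (hU : IsOpen U)
    (hUb : Bornology.IsBounded U) (hc : ContinuousOn u U) {m : ℝ}
    (hfr : ∀ y ∈ frontier U, ∀ t > m, ∀ᶠ x in 𝓝[U] y, u x < t) :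
    ∀ x ∈ U, u x ≤ m := by
  by_contra! h
  obtain ⟨x₁, hx₁, hm⟩ := h
  set K := {x ∈ U | u x₁ ≤ u x}
  have hKsub : K ⊆ U := sep_subset _ _
  have hKU : closure K ⊆ U := by
    intro y hy
    by_contra hyU
    have hyfr : y ∈ frontier U := by
      rw [hU.frontier_eq]
      exact ⟨closure_mono hKsub hy, hyU⟩
    have : (𝓝[K] y).NeBot := mem_closure_iff_nhdsWithin_neBot.mp hy
    obtain ⟨x, hlt, hxK⟩ :=
      (((hfr y hyfr _ hm).filter_mono (nhdsWithin_mono _ hKsub)).and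
        self_mem_nhdsWithin).exists
    exact hxK.2.not_gt hlt
  obtain ⟨x₀, hx₀K, hx₀max⟩ := (hUb.subset hKsub).isCompact_closure.exists_isMaxOn
    ⟨x₁, subset_closure ⟨hx₁, le_rfl⟩⟩ (hc.mono hKU)
  have hx₁x₀ : u x₁ ≤ u x₀ := hx₀max (subset_closure ⟨hx₁, le_rfl⟩)
  have hmaxU : IsMaxOn u U x₀ := fun x hx ↦ by
    by_cases hx' : u x₁ ≤ u x
    · exact hx₀max (subset_closure ⟨hx, hx'⟩)
    · exact (not_le.mp hx').le.trans hx₁x₀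
  have hlevel : {x ∈ U | u x = u x₀} = closure K ∩ u ⁻¹' {u x₀} := by
    ext x
    refine ⟨fun ⟨hxU, hx⟩ ↦ ⟨subset_closure ⟨hxU, hx ▸ hx₁x₀⟩, hx⟩, fun ⟨hxK, hx⟩ ↦ ⟨hKU hxK, hx⟩⟩
  have hclopen : IsClopen {x ∈ U | u x = u x₀} :=
    ⟨hlevel ▸ (hc.mono hKU).preimage_isClosed_of_isClosed isClosed_closure isClosed_singleton,
      hsm.isOpen_setOf_eq_of_isMaxOn hU hc hmaxU⟩
  have huniv : {x ∈ U | u x = u x₀} = univ :=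
    (isClopen_iff.mp hclopen).resolve_left (nonempty_iff_ne_empty.mp ⟨x₀, hKU hx₀K, rfl⟩)
  exact NormedSpace.unbounded_univ ℝ ℂ (hUb.subset (huniv ▸ sep_subset _ _))

theorem le_of_forall_frontier_eventually_lt_of_finite (hsm : SubMeanValueOn u (U \ Q))
    (hU : IsOpen U) (hUb : Bornology.IsBounded U) (hQ : Q.Finite) (hc : ContinuousOn u (U \ Q))
    (hbdd : BddAbove (u '' (U \ Q))) {m : ℝ}
    (hfr : ∀ y ∈ frontier U, ∀ t > m, ∀ᶠ x in 𝓝[U \ Q] y, u x < t) :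
    ∀ x ∈ U \ Q, u x ≤ m := by
  obtain ⟨M, hM⟩ := hbdd
  obtain ⟨D, hD1, hD⟩ := (isBounded_iff_exists_ge 1).mp (hUb.union hQ.isBounded)
  have hDpos : 0 < D := one_pos.trans_le hD1
  set ℓ : ℂ → ℝ := fun x ↦ ∑ p ∈ hQ.toFinset, Real.log (dist x p / D)
  have hlog_nonpos : ∀ x ∈ U, ∀ p ∈ Q, Real.log (dist x p / D) ≤ 0 := fun x hx p hp ↦
    Real.log_nonpos (by positivity) ((div_le_one hDpos).mpr (hD (Or.inl hx) (Or.inr hp)))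
  have hℓ_nonpos : ∀ x ∈ U, ℓ x ≤ 0 := fun x hx ↦
    Finset.sum_nonpos fun p hp ↦ hlog_nonpos x hx p (hQ.mem_toFinset.mp hp)
  have hℓ_le : ∀ x ∈ U, ∀ p ∈ Q, ℓ x ≤ Real.log (dist x p / D) := fun x hx p hp ↦ by
    simp only [ℓ]
    rw [← Finset.add_sum_erase _ _ (hQ.mem_toFinset.mpr hp)]
    exact add_le_of_nonpos_right (Finset.sum_nonpos fun q hq ↦
      hlog_nonpos x hx q (hQ.mem_toFinset.mp (Finset.mem_of_mem_erase hq)))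
  have hV : IsOpen (U \ Q) := hU.sdiff hQ.isClosed
  have hQV : ∀ p ∈ hQ.toFinset, p ∉ U \ Q := fun p hp h ↦ h.2 (hQ.mem_toFinset.mp hp)
  have hℓc : ContinuousOn ℓ (U \ Q) := continuousOn_sum_log_dist_div hQV hDpos.ne'
  have hperturbed : ∀ ε > 0, ∀ x ∈ U \ Q, u x + ε * ℓ x ≤ m := by
    intro ε hε
    refine (hsm.add (subMeanValueOn_mul_sum_log_dist_div hQV ε hDpos.ne') hc
      (continuousOn_const.mul hℓc)).le_of_forall_frontier_eventually_lt hV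
      (hUb.subset sdiff_subset) (hc.add (continuousOn_const.mul hℓc)) ?_
    intro y hy t ht
    rw [hV.frontier_eq] at hy
    by_cases hyQ : y ∈ Q
    · have hnear : ∀ᶠ x in 𝓝[U \ Q] y, Real.log (dist x y / D) < (t - M) / ε :=
        ((tendsto_log_dist_div_nhdsNE y hDpos).eventually_lt_atBot _).filter_mono
          (nhdsWithin_mono _ fun x (hx : x ∈ U \ Q) (hxy : x = y) ↦ hx.2 (hxy ▸ hyQ))
      filter_upwards [hnear, self_mem_nhdsWithin] with x hlog hxV
      calc u x + ε * ℓ x ≤ M + ε * Real.log (dist x y / D) :=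
            add_le_add (hM ⟨x, hxV, rfl⟩)
              (mul_le_mul_of_nonneg_left (hℓ_le x hxV.1 y hyQ) hε.le)
        _ < M + ε * ((t - M) / ε) := by gcongr
        _ = t := by field_simp; ring
    · have hyU : y ∈ frontier U := by
        rw [hU.frontier_eq]
        exact ⟨closure_mono sdiff_subset hy.1, fun hyU ↦ hy.2 ⟨hyU, hyQ⟩⟩
      filter_upwards [hfr y hyU t ht, self_mem_nhdsWithin] with x hx hxV
      linarith [mul_nonpos_of_nonneg_of_nonpos hε.le (hℓ_nonpos x hxV.1)]
  intro x hx
  have hlim : Tendsto (fun ε ↦ u x + ε * ℓ x) (𝓝[>] 0) (𝓝 (u x)) :=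
    ((continuous_const.add (continuous_id.mul continuous_const)).tendsto' 0 _
      (by simp)).mono_left nhdsWithin_le_nhds
  exact le_of_tendsto hlim (eventually_nhdsWithin_of_forall fun ε hε ↦ hperturbed ε hε x hx)

theorem le_of_mem_annulus (hsm : SubMeanValueOn u Fᶜ) (hF : F.Finite) (hc : ContinuousOn u Fᶜ)
    {M m : ℝ} (hM : ∀ x ∈ Fᶜ, u x ≤ M) (hmM : m ≤ M) {z : ℂ} {r R : ℝ} (hr : 0 < r)
    (hrR : r < R) (hball : closedBall z r ⊆ Fᶜ) (hsphere : sphere z R ⊆ Fᶜ)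
    (hm : ∀ y ∈ sphere z r, u y ≤ m) {x : ℂ} (hx : x ∈ Fᶜ) (hxr : r < dist x z)
    (hxR : dist x z < R) :
    u x ≤ m + (M - m) * (Real.log (dist x z / r) / Real.log (R / r)) := by
  have hlogR : 0 < Real.log (R / r) := Real.log_pos ((one_lt_div hr).mpr hrR)
  set b := (M - m) / Real.log (R / r)
  have hb : 0 ≤ b := div_nonneg (sub_nonneg.mpr hmM) hlogR.le
  set A := ball z R \ closedBall z r
  have hA : IsOpen A := isOpen_ball.sdiff isClosed_closedBall
  -- `b * log (|y - z| / r)` vanishes on the inner circle and equals `M - m` on the outer one.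
  set v := fun y ↦ u y + (-b) * Real.log (dist y z / r)
  have hzA : z ∉ A \ F := fun h ↦ h.1.2 (mem_closedBall_self hr.le)
  have hAF : A \ F ⊆ Fᶜ := fun y hy ↦ hy.2
  have hlogc := continuousOn_log_dist_div hzA hr.ne'
  have hvc : ∀ y ∈ Fᶜ, y ≠ z → ContinuousAt v y := fun y hyF hyz ↦
    (hc.continuousAt (hF.isClosed.isOpen_compl.mem_nhds hyF)).add (continuousAt_const.mul
      (((continuous_id.dist continuous_const).div_const r).continuousAt.log
        (div_ne_zero (dist_ne_zero.mpr hyz) hr.ne')))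
  have hvM : ∀ y ∈ A \ F, v y ≤ M := fun y hy ↦ by
    have hlog : 0 ≤ Real.log (dist y z / r) :=
      Real.log_nonneg ((one_le_div hr).mpr (not_le.mp (mem_closedBall.not.mp hy.1.2)).le)
    simp only [v]
    linarith [hM y hy.2, mul_nonneg hb hlog]
  have hvx : v x ≤ m := by
    refine ((hsm.mono hAF).add (subMeanValueOn_mul_log_dist_div hzA (-b) hr.ne') (hc.mono hAF)
      (continuousOn_const.mul hlogc)).le_of_forall_frontier_eventually_lt_of_finite hA
      (isBounded_ball.subset sdiff_subset) hF ((hc.mono hAF).add (continuousOn_const.mul hlogc))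
      ⟨M, forall_mem_image.mpr hvM⟩ ?_ x
      ⟨⟨mem_ball.mpr hxR, fun h ↦ (mem_closedBall.mp h).not_gt hxr⟩, hx⟩
    intro y hy t ht
    have hvy : y ∈ Fᶜ ∧ y ≠ z ∧ v y ≤ m := by
      rcases frontier_ball_sdiff_closedBall_subset z r R hy with hyR | hyr
      · rw [mem_sphere] at hyR
        have hbR : b * Real.log (R / r) = M - m := div_mul_cancel₀ _ hlogR.ne'
        refine ⟨hsphere hyR, dist_pos.mp (hyR ▸ hr.trans hrR), ?_⟩
        simp only [v, hyR]
        linarith [hM y (hsphere hyR)]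
      · rw [mem_sphere] at hyr
        refine ⟨hball (mem_closedBall.mpr hyr.le), dist_pos.mp (hyr ▸ hr), ?_⟩
        simp only [v, hyr, div_self hr.ne', Real.log_one, mul_zero, add_zero]
        exact hm y hyr
    exact ((hvc y hvy.1 hvy.2.1).tendsto.mono_left
      nhdsWithin_le_nhds).eventually_lt_const (hvy.2.2.trans_lt ht)
  have : b * Real.log (dist x z / r) =
      (M - m) * (Real.log (dist x z / r) / Real.log (R / r)) := by
    ring
  simp only [v] at hvx
  linarith

theorem le_of_le_on_sphere (hsm : SubMeanValueOn u Fᶜ) (hF : F.Finite) (hc : ContinuousOn u Fᶜ)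
    (hb : BddAbove (u '' Fᶜ)) {z : ℂ} {r m : ℝ} (hr : 0 < r) (hball : closedBall z r ⊆ Fᶜ)
    (hm : ∀ y ∈ sphere z r, u y ≤ m) : ∀ x ∈ Fᶜ, u x ≤ m := by
  have hcAt : ∀ y ∈ Fᶜ, ContinuousAt u y := fun y hy ↦
    hc.continuousAt (hF.isClosed.isOpen_compl.mem_nhds hy)
  intro x hx
  rcases lt_trichotomy (dist x z) r with hxr | hxr | hxr
  · refine (hsm.mono (ball_subset_closedBall.trans hball)).le_of_forall_frontier_eventually_lt
      isOpen_ball isBounded_ball (hc.mono (ball_subset_closedBall.trans hball)) ?_ x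
      (mem_ball.mpr hxr)
    rw [frontier_ball z hr.ne']
    exact fun y hy t ht ↦ ((hcAt y (hball (sphere_subset_closedBall hy))).tendsto.mono_left
      nhdsWithin_le_nhds).eventually_lt_const ((hm y hy).trans_lt ht)
  · exact hm x hxr
  · obtain ⟨M, hM⟩ := hb
    obtain ⟨R₀, hR₀⟩ := hF.isBounded.subset_ball z
    have hbound : ∀ᶠ R in atTop,
        u x ≤ m + (max M m - m) * (Real.log (dist x z / r) / Real.log (R / r)) := by
      filter_upwards [eventually_gt_atTop (max R₀ (dist x z))] with R hR
      exact hsm.le_of_mem_annulus hF hc (fun y hy ↦ (hM (mem_image_of_mem u hy)).trans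
        (le_max_left _ _)) (le_max_right _ _) hr (hxr.trans ((le_max_right _ _).trans_lt hR))
        hball (fun y hy hyF ↦ (mem_ball.mp (hR₀ hyF)).not_ge
          ((mem_sphere.mp hy).symm ▸ ((le_max_left _ _).trans hR.le)))
        hm hx hxr ((le_max_right _ _).trans_lt hR)
    have hlim : Tendsto (fun R ↦ m + (max M m - m) * (Real.log (dist x z / r) / Real.log (R / r)))
        atTop (𝓝 m) := by
      have : Tendsto (fun R ↦ Real.log (dist x z / r) / Real.log (R / r)) atTop (𝓝 0) :=
        tendsto_const_nhds.div_atTop (Real.tendsto_log_atTop.comp (tendsto_id.atTop_div_const hr))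
      simpa using tendsto_const_nhds.add (tendsto_const_nhds.mul this)
    exact ge_of_tendsto hlim hbound

end SubMeanValueOn

/-- A continuous function on `ℂ` minus a finite set which is bounded above and satisfies
the sub-mean value inequality there is constant. -/
theorem constant_of_subMeanValue_of_bddAbove (F : Set ℂ) (hF : F.Finite)
    (u : ℂ → ℝ) (hc : ContinuousOn u Fᶜ) (hb : BddAbove (u '' Fᶜ))
    (hsm : SubMeanValueOn u Fᶜ) :
    ∀ z ∈ Fᶜ, ∀ w ∈ Fᶜ, u z = u w := by
  have hle : ∀ z ∈ Fᶜ, ∀ w ∈ Fᶜ, u w ≤ u z := by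
    intro z hz w hw
    refine le_of_forall_pos_le_add fun η hη ↦ ?_
    have hnhds : Fᶜ ∩ {y | u y < u z + η} ∈ 𝓝 z :=
      inter_mem (hF.isClosed.isOpen_compl.mem_nhds hz)
        ((hc.continuousAt (hF.isClosed.isOpen_compl.mem_nhds hz)).eventually_lt_const
          (lt_add_of_pos_right _ hη))
    obtain ⟨ρ, hρ, hball⟩ := Metric.mem_nhds_iff.mp hnhds
    have hsub : closedBall z (ρ / 2) ⊆ ball z ρ := closedBall_subset_ball (half_lt_self hρ)
    exact hsm.le_of_le_on_sphere hF hc hb (half_pos hρ) (fun y hy ↦ (hball (hsub hy)).1)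
      (fun y hy ↦ (hball (hsub (sphere_subset_closedBall hy))).2.le) w hw
  exact fun z hz w hw ↦ le_antisymm (hle w hw z hz) (hle z hz w hw)
end
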